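/- There is a constant C > 0 such that for all n ∈ ℕ and l_b > 0, the L¹ norm of the vortex coherent state ψ_{z,n} satisfies ‖ψ_{z,n}‖_{L¹} = 2^{(n+3)/2} √π · l_b · Γ(n/2 + 1)/√(n!) ≤ C·(n+1)^{1/4}·l_b. -/

import Mathlib

open MeasureTheory Real Complex

/-- The vortex coherent state centered at `z ∈ ℂ` in the `n`-th Landau level, with magnetic
length `l_b`:
`ψ_{z,n}(x) = (i^n/(√(2π n!) l_b)) ((x̄ - z̄)/(√2 l_b))^n exp(-(|x-z|² - 2i z^⊥·x)/(4 l_b²))`,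
where `z^⊥·x = Re(conj(i z) x)`. -/
noncomputable def vortexCoherentState (n : ℕ) (l_b : ℝ) (z : ℂ) (x : ℂ) : ℂ :=
  (Complex.I ^ n / ((Real.sqrt (2 * π * n.factorial) * l_b : ℝ) : ℂ)) *
    ((starRingEnd ℂ) (x - z) / ((Real.sqrt 2 * l_b : ℝ) : ℂ)) ^ n *
    Complex.exp (-(((‖x - z‖ : ℝ) : ℂ) ^ 2
        - 2 * Complex.I * ((((starRingEnd ℂ) (Complex.I * z) * x).re : ℝ) : ℂ))
      / (4 * (l_b : ℂ) ^ 2))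

/-! Translating by `z`, `|ψ_{z,n}(x + z)| = c_n |x|^n e^{-|x|²/(4 l_b²)}` is radial, so its integral
is a Gaussian moment, i.e. a Gamma value. For the bound, Legendre's duplication formula rewrites
`2^n Γ(n/2+1)² / n!` as `√π Γ(n/2+1) / Γ((n+1)/2)`, and log-convexity of `Γ` (Gautschi's inequality
`Γ(s + 1/2) ≤ Γ(s) √s`) bounds this by `√(π (n+1)/2)`; the square root of that is the
`(n+1)^{1/4}` growth. -/

namespace Real

theorem Gamma_add_half_le_Gamma_mul_sqrt {x : ℝ} (hx : 0 < x) :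
    Gamma (x + 1 / 2) ≤ Gamma x * √x := by
  have hΓ : 0 < Gamma x := Gamma_pos_of_pos hx
  calc Gamma (x + 1 / 2) = Gamma ((1 / 2) * x + (1 / 2) * (x + 1)) := by ring_nf
    _ ≤ Gamma x ^ (1 / 2 : ℝ) * Gamma (x + 1) ^ (1 / 2 : ℝ) :=
      Gamma_mul_add_mul_le_rpow_Gamma_mul_rpow_Gamma hx (by linarith) (by norm_num)
        (by norm_num) (by norm_num)
    _ = Gamma x * √x := by
      rw [Gamma_add_one hx.ne', mul_rpow hx.le hΓ.le, ← sqrt_eq_rpow, ← sqrt_eq_rpow,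
        ← mul_assoc, mul_comm (√_) (√x), mul_assoc, mul_self_sqrt hΓ.le, mul_comm]

theorem two_pow_mul_Gamma_half_add_one_sq_le (n : ℕ) :
    (2 : ℝ) ^ n * Gamma (n / 2 + 1) ^ 2 ≤ √(π * (n + 1) / 2) * n.factorial := by
  set s : ℝ := (n + 1) / 2 with hs_def
  have hs : 0 < s := by positivity
  have hshift : s + 1 / 2 = n / 2 + 1 := by ring
  have hdup : Gamma s * Gamma (n / 2 + 1) = n.factorial * (2 ^ n)⁻¹ * √π := by
    rw [← hshift, Gamma_mul_Gamma_add_half, show 2 * s = (n : ℝ) + 1 by ring,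
      Gamma_nat_eq_factorial, show 1 - ((n : ℝ) + 1) = -(n : ℝ) by ring,
      rpow_neg zero_le_two, rpow_natCast]
  have hle : Gamma (n / 2 + 1) ≤ Gamma s * √s := hshift ▸ Gamma_add_half_le_Gamma_mul_sqrt hs
  have hpos : 0 ≤ Gamma (n / 2 + 1) := (Gamma_pos_of_pos (by positivity)).le
  calc 2 ^ n * Gamma (n / 2 + 1) ^ 2 ≤ 2 ^ n * (Gamma s * Gamma (n / 2 + 1) * √s) := by
        rw [sq, mul_right_comm (Gamma s)]
        gcongr
    _ = √(π * (n + 1) / 2) * n.factorial := by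
        rw [hdup, hs_def, show π * (n + 1) / 2 = π * ((n + 1) / 2) by ring,
          sqrt_mul pi_pos.le]
        field_simp

end Real

theorem two_rpow_add_three_div_two (n : ℕ) : (2 : ℝ) ^ (((n : ℝ) + 3) / 2) = √2 ^ (n + 3) := by
  rw [rpow_div_two_eq_sqrt _ zero_le_two]
  exact_mod_cast rpow_natCast √2 (n + 3)

theorem norm_vortexCoherentState_add (n : ℕ) {l : ℝ} (hl : 0 < l) (z x : ℂ) :
    ‖vortexCoherentState n l z (x + z)‖ =
      (√(2 * π * n.factorial) * l)⁻¹ * (√2 * l)⁻¹ ^ n *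
        (‖x‖ ^ (n : ℝ) * rexp (-(4 * l ^ 2)⁻¹ * ‖x‖ ^ (2 : ℝ))) := by
  have hexp : (-(((‖x + z - z‖ : ℝ) : ℂ) ^ 2
        - 2 * I * ((((starRingEnd ℂ) (I * z) * (x + z)).re : ℝ) : ℂ))
      / (4 * (l : ℂ) ^ 2)).re = -(4 * l ^ 2)⁻¹ * ‖x‖ ^ (2 : ℝ) := by
    have hI : (2 * I * (((starRingEnd ℂ) (I * z) * (x + z)).re : ℂ)).re = 0 := by simp
    rw [add_sub_cancel_right, ← ofReal_pow,
      show (4 : ℂ) * (l : ℂ) ^ 2 = ((4 * l ^ 2 : ℝ) : ℂ) by push_cast; ring,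
      div_ofReal_re, neg_re, sub_re, ofReal_re, hI, sub_zero, rpow_two, neg_div, div_eq_inv_mul,
      neg_mul]
  rw [vortexCoherentState, norm_mul, norm_mul, norm_exp, hexp, norm_pow, norm_div, norm_div,
    norm_pow, norm_I, one_pow, norm_real, norm_real, norm_eq_abs, norm_eq_abs,
    abs_of_pos (by positivity), abs_of_pos (by positivity), Complex.norm_conj,
    add_sub_cancel_right, rpow_natCast, div_pow, div_eq_inv_mul]
  ring

theorem integral_norm_vortexCoherentState (n : ℕ) {l : ℝ} (hl : 0 < l) (z : ℂ) :
    ∫ x : ℂ, ‖vortexCoherentState n l z x‖ =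
      (2 : ℝ) ^ (((n : ℝ) + 3) / 2) * √π * l * Real.Gamma (n / 2 + 1) / √(n.factorial : ℝ) := by
  have hmoment : (((4 * l ^ 2)⁻¹ : ℝ) ^ (-((n : ℝ) + 2) / 2)) = (2 * l) ^ (n + 2) := by
    rw [inv_rpow (by positivity), ← rpow_neg (by positivity), neg_div, neg_neg,
      show 4 * l ^ 2 = (2 * l) ^ (2 : ℝ) by rw [rpow_two]; ring, ← rpow_mul (by positivity),
      ← rpow_natCast]
    push_cast
    ring_nf
  rw [← integral_add_right_eq_self _ z]
  simp_rw [norm_vortexCoherentState_add n hl z]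
  rw [integral_const_mul, Complex.integral_rpow_mul_exp_neg_mul_rpow one_le_two
      (by linarith [n.cast_nonneg (α := ℝ)]) (by positivity), hmoment, two_rpow_add_three_div_two,
    show ((n : ℝ) + 2) / 2 = n / 2 + 1 by ring, sqrt_mul (by positivity), sqrt_mul zero_le_two]
  have h2 : (2 : ℝ) ^ (n + 2) = √2 ^ (n + 2) * √2 ^ (n + 2) := by
    rw [← mul_pow, mul_self_sqrt zero_le_two]
  rw [inv_pow, mul_pow, mul_pow, h2]
  field_simp
  rw [sq_sqrt pi_pos.le]
  ring

theorem two_rpow_mul_sqrt_pi_mul_Gamma_div_sqrt_factorial_le (n : ℕ) :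
    (2 : ℝ) ^ (((n : ℝ) + 3) / 2) * √π * Real.Gamma (n / 2 + 1) / √(n.factorial : ℝ)
      ≤ 2 * π * ((n : ℝ) + 1) ^ ((1 : ℝ) / 4) := by
  have hfac : (0 : ℝ) < n.factorial := by positivity
  have hquarter : (((n : ℝ) + 1) ^ ((1 : ℝ) / 4)) ^ 2 = √(n + 1) := by
    rw [sqrt_eq_rpow, ← rpow_natCast, ← rpow_mul (by positivity)]
    norm_num
  have hpi : √(π * (n + 1) / 2) * (8 * π) ≤ (2 * π) ^ 2 * √(n + 1) := by
    have hhalf : √(π / 2) ≤ π / 2 :=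
      sqrt_le_iff.mpr ⟨by positivity, by nlinarith [pi_gt_three]⟩
    rw [show π * (n + 1) / 2 = π / 2 * (n + 1) by ring, sqrt_mul (by positivity)]
    calc √(π / 2) * √(n + 1) * (8 * π) = √(π / 2) * (8 * π * √(n + 1)) := by ring
      _ ≤ π / 2 * (8 * π * √(n + 1)) := by gcongr
      _ = (2 * π) ^ 2 * √(n + 1) := by ring
  refine le_of_pow_le_pow_left₀ two_ne_zero (by positivity) ?_
  rw [mul_pow, hquarter, div_pow, sq_sqrt hfac.le, div_le_iff₀ hfac]
  calc (2 ^ (((n : ℝ) + 3) / 2) * √π * Real.Gamma (n / 2 + 1)) ^ 2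
      = 8 * π * (2 ^ n * Real.Gamma (n / 2 + 1) ^ 2) := by
        rw [two_rpow_add_three_div_two, mul_pow, mul_pow, sq_sqrt pi_pos.le, ← pow_mul, pow_mul',
          sq_sqrt zero_le_two]
        ring
    _ ≤ 8 * π * (√(π * (n + 1) / 2) * n.factorial) := by
        have := Real.two_pow_mul_Gamma_half_add_one_sq_le n
        gcongr
    _ ≤ (2 * π) ^ 2 * √(n + 1) * n.factorial := by
        rw [← mul_assoc, mul_comm (8 * π)]
        gcongr

/-- There is `C > 0` such that for all `n ∈ ℕ` and `l_b > 0` (and any center `z`),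
`‖ψ_{z,n}‖_{L¹} = 2^((n+3)/2) √π l_b Γ(n/2+1)/√(n!) ≤ C (n+1)^(1/4) l_b`. -/
theorem stmt_4 :
    ∃ C : ℝ, 0 < C ∧ ∀ (n : ℕ) (l_b : ℝ), 0 < l_b → ∀ z : ℂ,
      (∫ x : ℂ, ‖vortexCoherentState n l_b z x‖)
          = (2 : ℝ) ^ (((n : ℝ) + 3) / 2) * Real.sqrt π * l_b *
              Real.Gamma ((n : ℝ) / 2 + 1) / Real.sqrt (n.factorial : ℝ) ∧
      (∫ x : ℂ, ‖vortexCoherentState n l_b z x‖)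
          ≤ C * ((n : ℝ) + 1) ^ ((1 : ℝ) / 4) * l_b := by
  refine ⟨2 * π, by positivity, fun n l_b hl z => ⟨integral_norm_vortexCoherentState n hl z, ?_⟩⟩
  have hcoeff := two_rpow_mul_sqrt_pi_mul_Gamma_div_sqrt_factorial_le n
  calc ∫ x : ℂ, ‖vortexCoherentState n l_b z x‖
      = (2 : ℝ) ^ (((n : ℝ) + 3) / 2) * √π * Real.Gamma (n / 2 + 1) / √(n.factorial : ℝ) * l_b := by
        rw [integral_norm_vortexCoherentState n hl z]
        ring
    _ ≤ 2 * π * ((n : ℝ) + 1) ^ ((1 : ℝ) / 4) * l_b := by gcongr
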